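/- arXiv:1510.05589 — 4 statements merged into one kernel-verified Lean document; each statement's English description precedes it below -/
import Mathlib

section
/- If a Tychonoff space X is ℓ-dominated by the closed unit interval I = [0,1] (i.e., there is a continuous linear map of C_p(I) onto C_p(X)), then X is compact, metrizable, and strongly countable dimensional (equivalently, X has countable fd-height). -/
/-!
Each functional `f ↦ L f x` is continuous on `C_p(I)`, hence a finite combination `∑ cᵢ f(sᵢ)`
of point evaluations, and by Lagrange interpolation two combinations with `n` atoms each agree
as soon as their first `2n` moments do. Hence the moment map `x ↦ (L (t ↦ tᵐ) x)ₘ` is a continuous injection of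
`X` into `ℝ^ℕ`, and `X` is the union of the closed sets `X_n` of points whose combination has
`n` atoms and total weight at most `n`; through its first `2n` moments `X_n` injects continuously
into `ℝ^{2n}`, so it is finite dimensional as soon as it is compact.

`X` is pseudocompact: a continuous function outgrowing the total weights along a locally finite
sequence of nonempty open sets cannot lie in the range of `L`. A regular pseudocompact space with a
continuous injection into a compact metrizable space is countably compact, and a continuous
injection of a countably compact space into a compact metrizable space is a closed embedding.
-/

open Set Function

noncomputable section

/-- Topology of pointwise convergence on `C(X, ℝ)`. -/
def ptTop (X : Type*) [TopologicalSpace X] : TopologicalSpace C(X, ℝ) :=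
  TopologicalSpace.induced (fun f => (f : X → ℝ)) Pi.topologicalSpace

/-- `X` ℓ-dominates `Y`: a continuous linear map of `C_p(X)` onto `C_p(Y)`. -/
def LDominates (X Y : Type*) [TopologicalSpace X] [TopologicalSpace Y] : Prop :=
  ∃ L : C(X, ℝ) →ₗ[ℝ] C(Y, ℝ), @Continuous _ _ (ptTop X) (ptTop Y) L ∧ Surjective L

/-- Covering dimension at most `n`. -/
def CovDimLE (X : Type*) [TopologicalSpace X] (n : ℕ) : Prop :=
  ∀ (ι : Type) (U : ι → Set X), Finite ι → (∀ i, IsOpen (U i)) → (⋃ i, U i) = univ →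
    ∃ V : ι → Set X, (∀ i, IsOpen (V i)) ∧ (∀ i, V i ⊆ U i) ∧ (⋃ i, V i) = univ ∧
      ∀ x : X, {i | x ∈ V i}.ncard ≤ n + 1

/-- Finite (covering) dimensional space. -/
def FinDimSpace (X : Type*) [TopologicalSpace X] : Prop := ∃ n : ℕ, CovDimLE X n

/-- Strongly countable dimensional space. -/
def StronglyCountableDim (X : Type*) [TopologicalSpace X] : Prop :=
  ∃ F : ℕ → Set X, (∀ n, IsClosed (F n)) ∧ (∀ n, FinDimSpace ↥(F n)) ∧ (⋃ n, F n) = univ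

/-- `I(S)` relative to a subset: points of `S` with a relatively open
finite dimensional neighbourhood in `S`. -/
def fdI (X : Type*) [TopologicalSpace X] (S : Set X) : Set X :=
  {x | x ∈ S ∧ ∃ U : Set X, IsOpen U ∧ x ∈ U ∧ FinDimSpace ↥(U ∩ S)}

/-- The transfinite derived sets `K^[α]`. -/
def fdDerived (X : Type*) [TopologicalSpace X] : Ordinal → Set X := fun o =>
  Ordinal.limitRecOn o (univ : Set X)
    (fun _ S => S \ fdI X S)
    (fun o _ ih => ⋂ (o' : Ordinal) (h : o' < o), ih o' h)

/-- A k_ω sequence for `X`. -/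
def IsKOmegaSeq (X : Type*) [TopologicalSpace X] (K : ℕ → Set X) : Prop :=
  (∀ n, IsCompact (K n)) ∧ (∀ n, K n ⊆ K (n + 1)) ∧
  (∀ C : Set X, IsCompact C → ∃ n, C ⊆ K n) ∧
  (∀ A : Set X, (∀ n, ∃ F : Set X, IsClosed F ∧ A ∩ K n = F ∩ K n) → IsClosed A)

def KOmegaSpace (X : Type*) [TopologicalSpace X] : Prop := ∃ K : ℕ → Set X, IsKOmegaSeq X K

/-- Submetrizable: there is a coarser metrizable topology. -/
def Submetrizable (X : Type*) [TopologicalSpace X] : Prop :=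
  ∃ t' : TopologicalSpace X, (∀ s : Set X, @IsOpen X t' s → IsOpen s) ∧
    @TopologicalSpace.MetrizableSpace X t'

def Hemicompact (X : Type*) [TopologicalSpace X] : Prop :=
  ∃ K : ℕ → Set X, (∀ n, IsCompact (K n)) ∧ ∀ C : Set X, IsCompact C → ∃ n, C ⊆ K n

/-- `B` is (functionally) bounded in `X`. -/
def CBounded (X : Type*) [TopologicalSpace X] (B : Set X) : Prop :=
  ∀ f : C(X, ℝ), ∃ M : ℝ, ∀ x ∈ B, |f x| ≤ M

/-- μ-space: closed bounded subsets are compact. -/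
def MuSpace (X : Type*) [TopologicalSpace X] : Prop :=
  ∀ B : Set X, IsClosed B → CBounded X B → IsCompact B

/-- `C(K; A)`: continuous functions vanishing on `A`, as a submodule. -/
def Czero (K : Type*) [TopologicalSpace K] (A : Set K) : Submodule ℝ C(K, ℝ) where
  carrier := {f | ∀ x ∈ A, f x = 0}
  add_mem' := by intro f g hf hg x hx; simp [hf x hx, hg x hx]
  zero_mem' := by intro x hx; simp
  smul_mem' := by intro c f hf x hx; simp [hf x hx]

/-- Pointwise topology on `C(K;A)`. -/
def ptTopSub {K : Type*} [TopologicalSpace K] (A : Set K) :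
    TopologicalSpace (Czero K A) :=
  TopologicalSpace.induced (fun f => (f : C(K, ℝ))) (ptTop K)

/-- `c`-good map between relative function spaces. -/
def IsCGood {K₁ K₂ : Type*} [TopologicalSpace K₁] [CompactSpace K₁]
    [TopologicalSpace K₂] [CompactSpace K₂] (A₁ : Set K₁) (A₂ : Set K₂) (c : ℝ)
    (L : Czero K₁ A₁ →ₗ[ℝ] Czero K₂ A₂) : Prop :=
  @Continuous _ _ (ptTopSub A₁) (ptTopSub A₂) L ∧
  (∀ g : Czero K₁ A₁, ‖(L g : C(K₂, ℝ))‖ ≤ ‖(g : C(K₁, ℝ))‖) ∧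
  (∀ f : Czero K₂ A₂, ∃ g : Czero K₁ A₁, L g = f ∧
    ‖(g : C(K₁, ℝ))‖ ≤ c * ‖(f : C(K₂, ℝ))‖)

/-- `c`-good map between full function spaces. -/
def IsCGoodMap {K₁ K₂ : Type*} [TopologicalSpace K₁] [CompactSpace K₁]
    [TopologicalSpace K₂] [CompactSpace K₂] (c : ℝ)
    (L : C(K₁, ℝ) →ₗ[ℝ] C(K₂, ℝ)) : Prop :=
  @Continuous _ _ (ptTop K₁) (ptTop K₂) L ∧
  (∀ g : C(K₁, ℝ), ‖L g‖ ≤ ‖g‖) ∧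
  (∀ f : C(K₂, ℝ), ∃ g : C(K₁, ℝ), L g = f ∧ ‖g‖ ≤ c * ‖f‖)


open Filter Topology Polynomial

theorem sum_mul_eval_eq_sum {F ι : Type*} [CommRing F] [Fintype ι] (s c : ι → F) (p : F[X]) :
    ∑ i, c i * p.eval (s i) = p.sum fun m a => a * ∑ i, c i * s i ^ m := by
  simp only [eval_eq_sum, Polynomial.sum_def, Finset.mul_sum]
  rw [Finset.sum_comm]
  exact Finset.sum_congr rfl fun m _ => Finset.sum_congr rfl fun i _ => by ring

theorem sum_mul_eq_of_moments_eq {F ι ι' : Type*} [Field F] [Fintype ι] [Fintype ι']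
    {s c : ι → F} {s' c' : ι' → F}
    (h : ∀ m < Fintype.card ι + Fintype.card ι', ∑ i, c i * s i ^ m = ∑ i, c' i * s' i ^ m)
    (g : F → F) : ∑ i, c i * g (s i) = ∑ i, c' i * g (s' i) := by
  classical
  set T := Finset.univ.image s ∪ Finset.univ.image s'
  set p := Lagrange.interpolate T id g
  have hp : ∀ t ∈ T, p.eval t = g t := fun t ht =>
    Lagrange.eval_interpolate_at_node g (Set.injOn_id _) ht
  have hT : T.card ≤ Fintype.card ι + Fintype.card ι' :=
    (Finset.card_union_le _ _).trans (add_le_add Finset.card_image_le Finset.card_image_le)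
  have hdeg : ∀ m ∈ p.support, m < Fintype.card ι + Fintype.card ι' := fun m hm => by
    have := (le_degree_of_ne_zero (mem_support_iff.1 hm)).trans_lt
      (Lagrange.degree_interpolate_lt g (Set.injOn_id _))
    exact lt_of_lt_of_le (by exact_mod_cast this) hT
  calc ∑ i, c i * g (s i) = ∑ i, c i * p.eval (s i) := by simp [hp, T]
    _ = ∑ i, c' i * p.eval (s' i) := by
        rw [sum_mul_eval_eq_sum, sum_mul_eval_eq_sum]
        exact Finset.sum_congr rfl fun m hm => by simp only [h m (hdeg m hm)]
    _ = ∑ i, c' i * g (s' i) := by simp [hp, T]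

theorem covDimLE_of_refinement {Y ζ : Type*} [TopologicalSpace Y] {n : ℕ}
    (h : ∀ (ι : Type) (U : ι → Set Y), Finite ι → (∀ i, IsOpen (U i)) → (⋃ i, U i) = univ →
      ∃ Q : ζ → Set Y, (∀ z, IsOpen (Q z)) ∧ (∀ y, ∃ z, y ∈ Q z) ∧ (∀ z, ∃ i, Q z ⊆ U i) ∧
        ∀ y, ∃ F : Finset ζ, F.card ≤ n + 1 ∧ ∀ z, y ∈ Q z → z ∈ F) :
    CovDimLE Y n := by
  classical
  intro ι U hι hU hcov
  obtain ⟨Q, hQ, hQcov, hQU, hQmult⟩ := h ι U hι hU hcov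
  choose pick hpick using hQU
  refine ⟨fun i => ⋃ (z) (_ : pick z = i), Q z, fun i => isOpen_biUnion fun z _ => hQ z,
    fun i => iUnion₂_subset fun z hz => hz ▸ hpick z, ?_, fun y => ?_⟩
  · refine eq_univ_of_forall fun y => ?_
    obtain ⟨z, hz⟩ := hQcov y
    exact mem_iUnion.2 ⟨pick z, mem_iUnion₂.2 ⟨z, rfl, hz⟩⟩
  · obtain ⟨F, hF, hFQ⟩ := hQmult y
    have hsub : {i | y ∈ ⋃ (z) (_ : pick z = i), Q z} ⊆ F.image pick := by
      intro i hi
      obtain ⟨z, rfl, hz⟩ := mem_iUnion₂.1 hi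
      exact Finset.mem_image_of_mem pick (hFQ z hz)
    calc _ ≤ (F.image pick : Set ι).ncard := ncard_le_ncard hsub (Finset.finite_toSet _)
      _ ≤ F.card := by rw [ncard_coe_finset]; exact Finset.card_image_le
      _ ≤ n + 1 := hF

def gridCube {m : ℕ} (κ : ℝ) (z : Fin m → ℤ) : Set (Fin m → ℝ) :=
  univ.pi fun j => Ioo (κ * z j) (κ * (z j + 2))

section GridCube

variable {m : ℕ} {κ : ℝ}

theorem isOpen_gridCube (z : Fin m → ℤ) : IsOpen (gridCube κ z) :=
  isOpen_set_pi finite_univ fun _ _ => isOpen_Ioo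

theorem mem_gridCube_ceil (hκ : 0 < κ) (x : Fin m → ℝ) :
    x ∈ gridCube κ (fun j => ⌈x j / κ⌉ - 1) := by
  intro j _
  have hx : κ * (x j / κ) = x j := mul_div_cancel₀ _ hκ.ne'
  have h₁ := mul_lt_mul_of_pos_left (Int.ceil_lt_add_one (x j / κ)) hκ
  have h₂ := mul_le_mul_of_nonneg_left (Int.le_ceil (x j / κ)) hκ.le
  constructor <;> push_cast <;> linarith

theorem dist_lt_of_mem_gridCube (hκ : 0 < κ) {z : Fin m → ℤ} {x w : Fin m → ℝ}
    (hx : x ∈ gridCube κ z) (hw : w ∈ gridCube κ z) : dist x w < 2 * κ := by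
  refine (dist_pi_lt_iff (by positivity)).2 fun j => ?_
  have hxj := hx j (mem_univ j)
  have hwj := hw j (mem_univ j)
  rw [Real.dist_eq, abs_sub_lt_iff]
  constructor <;> linarith [hxj.1, hxj.2, hwj.1, hwj.2]

/-- Along each axis a point lies in the cubes with `z j = ⌈x j / κ⌉ - 1` or `⌈x j / κ⌉ - 2`. -/
theorem exists_finset_gridCube (hκ : 0 < κ) (x : Fin m → ℝ) :
    ∃ F : Finset (Fin m → ℤ), F.card ≤ 2 ^ m ∧ ∀ z, x ∈ gridCube κ z → z ∈ F := by
  classical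
  refine ⟨Finset.univ.image fun (b : Fin m → Bool) j => ⌈x j / κ⌉ - 1 - if b j then 1 else 0,
    Finset.card_image_le.trans (by simp), fun z hz => Finset.mem_image.2
      ⟨fun j => decide (z j = ⌈x j / κ⌉ - 2), Finset.mem_univ _, funext fun j => ?_⟩⟩
  obtain ⟨h₁, h₂⟩ := hz j (mem_univ j)
  have hlt : z j < ⌈x j / κ⌉ := Int.lt_ceil.2 (by rw [lt_div_iff₀ hκ]; linarith)
  have hgt : ⌈x j / κ⌉ < z j + 3 := by
    have := Int.ceil_lt_add_one (x j / κ)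
    have : x j / κ < z j + 2 := by rw [div_lt_iff₀ hκ]; linarith
    exact_mod_cast (show (⌈x j / κ⌉ : ℝ) < z j + 3 by linarith)
  by_cases hz2 : z j = ⌈x j / κ⌉ - 2 <;> simp [hz2] <;> omega

end GridCube

theorem covDimLE_of_continuous_injective {Y : Type*} [TopologicalSpace Y] [CompactSpace Y]
    {m : ℕ} {q : Y → Fin m → ℝ} (hq : Continuous q) (hq_inj : Injective q) :
    CovDimLE Y (2 ^ m - 1) := by
  rcases isEmpty_or_nonempty Y with hY | ⟨⟨y₀⟩⟩
  · exact fun ι U _ hU hcov => ⟨U, hU, fun _ => subset_rfl, hcov, isEmptyElim⟩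
  refine covDimLE_of_refinement (ζ := Fin m → ℤ) fun ι U _ hU hcov => ?_
  have hmem : ∀ y, ∃ i, y ∈ U i := fun y => mem_iUnion.1 (hcov ▸ mem_univ y)
  choose O hO hOU using fun i => (hq.isClosedEmbedding hq_inj).isInducing.isOpen_iff.1 (hU i)
  obtain ⟨δ, hδ, hleb⟩ := lebesgue_number_lemma_of_metric (isCompact_range hq) hO
    (range_subset_iff.2 fun y => mem_iUnion.2 ((hmem y).imp fun i hi => by rwa [← hOU i] at hi))
  have hκ : 0 < δ / 2 := half_pos hδ
  refine ⟨fun z => q ⁻¹' gridCube (δ / 2) z, fun z => (isOpen_gridCube z).preimage hq,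
    fun y => ⟨_, mem_gridCube_ceil hκ (q y)⟩, fun z => ?_, fun y => ?_⟩
  · by_cases hz : (q ⁻¹' gridCube (δ / 2) z).Nonempty
    · obtain ⟨y, hy⟩ := hz
      obtain ⟨i, hi⟩ := hleb (q y) (mem_range_self y)
      refine ⟨i, fun w hw => hOU i ▸ hi ?_⟩
      have := dist_lt_of_mem_gridCube hκ hw hy
      rw [Metric.mem_ball]
      linarith
    · exact ⟨(hmem y₀).choose, by simp [not_nonempty_iff_eq_empty.1 hz]⟩
  · obtain ⟨F, hF, hFz⟩ := exists_finset_gridCube hκ (q y)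
    exact ⟨F, by rw [Nat.sub_add_cancel Nat.one_le_two_pow]; exact hF, fun z hz => hFz z hz⟩

theorem exists_continuous_le_of_locallyFinite {X ι : Type*} [TopologicalSpace X]
    [CompletelyRegularSpace X] {U : ι → Set X} (hU : ∀ i, IsOpen (U i)) (hlf : LocallyFinite U)
    {z : ι → X} (hz : ∀ i, z i ∈ U i) (b : ι → ℝ) : ∃ h : C(X, ℝ), ∀ i, b i ≤ h (z i) := by
  have bump : ∀ i, ∃ g : X → ℝ, Continuous g ∧ g (z i) = 1 ∧ (∀ u, 0 ≤ g u) ∧ support g ⊆ U i := by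
    intro i
    obtain ⟨f, hf, hfz, hf1⟩ := CompletelyRegularSpace.completely_regular (z i) (U i)ᶜ
      (hU i).isClosed_compl (not_not_intro (hz i))
    refine ⟨fun u => 1 - f u, by fun_prop, by simp [hfz], fun u => by simp [(f u).2.2], ?_⟩
    intro u hu
    by_contra hu'
    exact hu (by simp [hf1 hu'])
  choose g hg hgz hg0 hgU using bump
  let f : ι → X → ℝ := fun i u => max (b i) 0 * g i u
  have hf_supp : ∀ i, support (f i) ⊆ U i := fun i => (support_mul_subset_right _ _).trans (hgU i)
  refine ⟨⟨fun u => ∑ᶠ i, f i u, continuous_finsum (fun i => continuous_const.mul (hg i))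
    (hlf.subset hf_supp)⟩, fun i => ?_⟩
  calc b i ≤ f i (z i) := by simp [f, hgz]
    _ ≤ ∑ᶠ j, f j (z i) := single_le_finsum i ((hlf.point_finite (z i)).subset fun j hj =>
          hf_supp j hj) fun j => mul_nonneg (le_max_right _ _) (hg0 j _)

theorem exists_locallyFinite_of_tendsto {X : Type*} [TopologicalSpace X] {d : X → ℝ}
    (hd : Continuous d) {V : Set X} (hV : IsClosed V) (hdV : ∀ u, d u ≤ 0 → u ∈ interior V)
    {z : ℕ → X} (hzV : ∀ j, z j ∉ V) (hz : Tendsto (d ∘ z) atTop (𝓝 0)) :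
    ∃ U : ℕ → Set X, (∀ j, IsOpen (U j)) ∧ LocallyFinite U ∧ ∀ j, z j ∈ U j := by
  have hdz : ∀ j, 0 < d (z j) := fun j =>
    lt_of_not_ge fun h => hzV j (interior_subset (hdV _ h))
  refine ⟨fun j => {u | d u < 2 * d (z j)} \ V,
    fun j => (isOpen_lt hd continuous_const).sdiff hV, fun u => ?_,
    fun j => ⟨by simp [hdz j], hzV j⟩⟩
  by_cases hu : d u ≤ 0
  · exact ⟨interior V, isOpen_interior.mem_nhds (hdV u hu),
      finite_empty.subset fun j ⟨_, hwU, hwV⟩ => hwU.2 (interior_subset hwV)⟩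
  · replace hu := not_le.1 hu
    have hfin : {j | ¬ d (z j) < d u / 4}.Finite := by
      rw [← eventually_cofinite, Nat.cofinite_eq_atTop]
      exact hz.eventually_lt_const (by positivity)
    refine ⟨{w | d u / 2 < d w}, (isOpen_lt continuous_const hd).mem_nhds (by simp; linarith),
      hfin.subset fun j ⟨w, hwU, hwW⟩ => ?_⟩
    simp only [mem_ofPred_eq, Set.mem_sdiff] at hwU hwW ⊢
    linarith [hwU.1]

theorem countablyCompactSpace_of_locallyFinite {X M : Type*} [TopologicalSpace X] [RegularSpace X]
    [TopologicalSpace M] [TopologicalSpace.MetrizableSpace M] [SeqCompactSpace M] {e : X → M}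
    (he : Continuous e) (he_inj : Injective e)
    (h : ∀ U : ℕ → Set X, (∀ i, IsOpen (U i)) → LocallyFinite U → ∃ i, U i = ∅) :
    CountablyCompactSpace X := by
  rw [← isCountablyCompact_univ_iff]
  refine IsCountablyCompact.of_seq_clusterPt fun x _ => ?_
  by_contra! hx
  obtain ⟨q, φ, hφ, hq⟩ := SeqCompactSpace.tendsto_subseq (e ∘ x)
  have hz : ∀ y, ¬ MapClusterPt y atTop (x ∘ φ) := fun y hy =>
    hx y (mem_univ y) (hy.of_comp hφ.tendsto_atTop)
  obtain ⟨V, hV, hqV, hzV⟩ : ∃ V, IsClosed V ∧ e ⁻¹' {q} ⊆ interior V ∧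
      ∀ᶠ j in atTop, x (φ j) ∉ V := by
    by_cases hq' : ∃ y, e y = q
    · obtain ⟨y, rfl⟩ := hq'
      obtain ⟨s, hs, hzs⟩ : ∃ s ∈ 𝓝 y, ∀ᶠ j in atTop, x (φ j) ∉ s := by
        simpa [mapClusterPt_iff_frequently] using hz y
      obtain ⟨V, hVy, hV, hVs⟩ := exists_mem_nhds_isClosed_subset hs
      refine ⟨V, hV, fun u hu => ?_, hzs.mono fun j hj hjV => hj (hVs hjV)⟩
      rw [he_inj hu]
      exact mem_interior_iff_mem_nhds.2 hVy
    · exact ⟨∅, isClosed_empty, fun u hu => (hq' ⟨u, hu⟩).elim, Eventually.of_forall fun _ => id⟩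
  obtain ⟨N, hN⟩ := eventually_atTop.1 hzV
  let := TopologicalSpace.metrizableSpaceMetric M
  obtain ⟨U, hU, hlf, hzU⟩ := exists_locallyFinite_of_tendsto (z := fun j => x (φ (j + N)))
    (d := fun u => dist (e u) q) (he.dist continuous_const) hV
    (fun u hu => hqV (dist_le_zero.1 hu)) (fun j => hN _ (Nat.le_add_left N j))
    ((tendsto_iff_dist_tendsto_zero.1 hq).comp (tendsto_add_atTop_nat N))
  obtain ⟨i, hi⟩ := h U hU hlf
  exact (hi ▸ hzU i : x (φ (i + N)) ∈ (∅ : Set X))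

theorem isClosedEmbedding_of_countablyCompactSpace {X M : Type*} [TopologicalSpace X]
    [CountablyCompactSpace X] [TopologicalSpace M] [T2Space M] [HereditarilyLindelofSpace M]
    {e : X → M} (he : Continuous e) (he_inj : Injective e) : IsClosedEmbedding e :=
  .of_continuous_injective_isClosedMap he he_inj fun _ hF =>
    ((hF.isCountablyCompact.image he).isCompact).isClosed

section Representation

variable {K X : Type*} [TopologicalSpace K] [TopologicalSpace X] {L : C(K, ℝ) →ₗ[ℝ] C(X, ℝ)}

theorem ptTop_eq_iInf_induced :
    ptTop K = ⨅ p : K, .induced (ContinuousMap.evalCLM ℝ p).toLinearMap inferInstance := by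
  simp only [ptTop, Pi.topologicalSpace, induced_iInf, induced_compose]
  rfl

theorem exists_sum_eq_of_continuous (φ : C(K, ℝ) →ₗ[ℝ] ℝ)
    (hφ : Continuous[ptTop K, inferInstance] φ) :
    ∃ (k : ℕ) (s : Fin k → K) (c : Fin k → ℝ), ∀ f, φ f = ∑ i, c i * f (s i) := by
  rw [ptTop_eq_iInf_induced, ← LinearMap.mem_span_iff_continuous,
    Finsupp.mem_span_range_iff_exists_finsupp] at hφ
  obtain ⟨c, rfl⟩ := hφ
  let e := c.support.equivFin.symm
  refine ⟨c.support.card, fun i => e i, fun i => c (e i), fun f => ?_⟩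
  rw [Finsupp.sum, LinearMap.sum_apply, ← Finset.sum_coe_sort, ← e.sum_comp]
  rfl

theorem exists_sum_eq_apply (hL : Continuous[ptTop K, ptTop X] L) (x : X) :
    ∃ (k : ℕ) (s : Fin k → K) (c : Fin k → ℝ), ∀ f, L f x = ∑ i, c i * f (s i) :=
  exists_sum_eq_of_continuous ((ContinuousMap.evalCLM ℝ x).toLinearMap ∘ₗ L)
    (@Continuous.comp _ _ _ (ptTop K) (ptTop X) _ _ _
      (@Continuous.comp _ _ _ (ptTop X) _ _ _ _ (continuous_apply x) continuous_induced_dom) hL)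

theorem exists_abs_apply_le [CompactSpace K] (hL : Continuous[ptTop K, ptTop X] L) (x : X) :
    ∃ C, 0 ≤ C ∧ ∀ f, |L f x| ≤ C * ‖f‖ := by
  obtain ⟨k, s, c, hrep⟩ := exists_sum_eq_apply hL x
  refine ⟨∑ i, |c i|, Finset.sum_nonneg fun i _ => abs_nonneg _, fun f => ?_⟩
  calc |L f x| ≤ ∑ i, |c i| * |f (s i)| := by
        simpa only [hrep f, abs_mul] using
          Finset.abs_sum_le_sum_abs (fun i => c i * f (s i)) Finset.univ
    _ ≤ ∑ i, |c i| * ‖f‖ := by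
        gcongr with i
        exact f.norm_coe_le_norm (s i)
    _ = (∑ i, |c i|) * ‖f‖ := (Finset.sum_mul _ _ _).symm

theorem eq_of_forall_apply_eq [CompletelyRegularSpace X] [T1Space X] (hLs : Surjective L)
    {x y : X} (h : ∀ f, L f x = L f y) : x = y := by
  by_contra hxy
  obtain ⟨g, hg, hgx, hgy⟩ := CompletelyRegularSpace.completely_regular x {y} isClosed_singleton hxy
  obtain ⟨f, hf⟩ := hLs ⟨fun u => g u, by fun_prop⟩
  have := h f
  simp [hf, hgx, hgy rfl] at this

/-- `X` is pseudocompact. -/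
theorem exists_empty_of_locallyFinite [CompactSpace K] [CompletelyRegularSpace X]
    (hL : Continuous[ptTop K, ptTop X] L) (hLs : Surjective L) {U : ℕ → Set X}
    (hU : ∀ i, IsOpen (U i)) (hlf : LocallyFinite U) : ∃ i, U i = ∅ := by
  by_contra! hne
  choose z hz using hne
  choose C hC0 hC using exists_abs_apply_le hL
  obtain ⟨h, hh⟩ := exists_continuous_le_of_locallyFinite hU hlf hz fun i => i * C (z i) + 1
  obtain ⟨f, rfl⟩ := hLs h
  obtain ⟨i, hi⟩ := exists_nat_ge ‖f‖
  have := (hh i).trans ((le_abs_self _).trans (hC (z i) f))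
  nlinarith [mul_le_mul_of_nonneg_left hi (hC0 (z i))]

end Representation

section Moments

variable {X : Type*} [TopologicalSpace X] {L : C(unitInterval, ℝ) →ₗ[ℝ] C(X, ℝ)}

def atomMoments {ι : Type*} [Fintype ι] (s : ι → unitInterval) (c : ι → ℝ) (m : ℕ) : ℝ :=
  ∑ i, c i * (s i : ℝ) ^ m

theorem sum_mul_eq_of_atomMoments_eq {ι ι' : Type*} [Fintype ι] [Fintype ι']
    {s : ι → unitInterval} {c : ι → ℝ} {s' : ι' → unitInterval} {c' : ι' → ℝ}
    (h : ∀ m < Fintype.card ι + Fintype.card ι', atomMoments s c m = atomMoments s' c' m)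
    (f : unitInterval → ℝ) : ∑ i, c i * f (s i) = ∑ i, c' i * f (s' i) := by
  simpa only [Set.projIcc_val] using sum_mul_eq_of_moments_eq (s := fun i => (s i : ℝ))
    (s' := fun i => (s' i : ℝ)) h fun t => f (Set.projIcc 0 1 zero_le_one t)

variable (L) in
def momentMap (x : X) (m : ℕ) : ℝ :=
  L ⟨fun t => (t : ℝ) ^ m, by fun_prop⟩ x

variable (L) in
theorem continuous_momentMap : Continuous (momentMap L) :=
  continuous_pi fun _ => (L _).continuous

theorem apply_eq_sum_of_momentMap_eq (hL : Continuous[ptTop unitInterval, ptTop X] L)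
    {ι : Type*} [Fintype ι] {s : ι → unitInterval} {c : ι → ℝ} {x : X}
    (h : momentMap L x = atomMoments s c) (f : C(unitInterval, ℝ)) :
    L f x = ∑ i, c i * f (s i) := by
  obtain ⟨k, s₀, c₀, hrep⟩ := exists_sum_eq_apply hL x
  rw [hrep f]
  exact sum_mul_eq_of_atomMoments_eq (fun m _ => (hrep _).symm.trans (congrFun h m)) f

def boundedMoments (n : ℕ) : Set (ℕ → ℝ) :=
  (fun p : (Fin n → unitInterval) × (Fin n → ℝ) => atomMoments p.1 p.2) ''
    {p | ∑ i, |p.2 i| ≤ n}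

theorem isCompact_boundedMoments (n : ℕ) : IsCompact (boundedMoments n) := by
  have hS : IsCompact {c : Fin n → ℝ | ∑ i, |c i| ≤ n} := by
    refine Metric.isCompact_of_isClosed_isBounded (isClosed_le (by fun_prop) continuous_const)
      ((Metric.isBounded_closedBall (x := 0) (r := n)).subset fun c hc => ?_)
    refine mem_closedBall_zero_iff.2 ((pi_norm_le_iff_of_nonneg n.cast_nonneg).2 fun i => ?_)
    exact (Finset.single_le_sum (fun j _ => abs_nonneg (c j)) (Finset.mem_univ i)).trans hc
  have := ((isCompact_univ (X := Fin n → unitInterval)).prod hS).image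
    (f := fun p => atomMoments p.1 p.2) (continuous_pi fun m => by unfold atomMoments; fun_prop)
  rwa [univ_prod] at this

variable (L) in
def momentLevel (n : ℕ) : Set X :=
  momentMap L ⁻¹' boundedMoments n

variable (L) in
theorem isClosed_momentLevel (n : ℕ) : IsClosed (momentLevel L n) :=
  (isCompact_boundedMoments n).isClosed.preimage (continuous_momentMap L)

theorem exists_mem_momentLevel (hL : Continuous[ptTop unitInterval, ptTop X] L) (x : X) :
    ∃ n, x ∈ momentLevel L n := by
  obtain ⟨k, s, c, hrep⟩ := exists_sum_eq_apply hL x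
  refine ⟨k + ⌈∑ i, |c i|⌉₊, (Fin.append s fun _ => 0, Fin.append c 0), ?_, funext fun m => ?_⟩
  · simp only [mem_ofPred_eq, Fin.sum_univ_add, Fin.append_left, Fin.append_right,
      Pi.zero_apply, abs_zero, Finset.sum_const_zero, add_zero, Nat.cast_add]
    linarith [Nat.le_ceil (∑ i, |c i|), (k.cast_nonneg : (0 : ℝ) ≤ k)]
  · simp [atomMoments, Fin.sum_univ_add, momentMap, hrep]

theorem eq_of_mem_momentLevel [CompletelyRegularSpace X] [T1Space X]
    (hL : Continuous[ptTop unitInterval, ptTop X] L) (hLs : Surjective L) {n : ℕ} {x y : X}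
    (hx : x ∈ momentLevel L n) (hy : y ∈ momentLevel L n)
    (h : ∀ m < n + n, momentMap L x m = momentMap L y m) : x = y := by
  obtain ⟨⟨s, c⟩, -, hsc⟩ := hx
  obtain ⟨⟨s', c'⟩, -, hsc'⟩ := hy
  refine eq_of_forall_apply_eq hLs fun f => ?_
  rw [apply_eq_sum_of_momentMap_eq hL hsc.symm, apply_eq_sum_of_momentMap_eq hL hsc'.symm]
  refine sum_mul_eq_of_atomMoments_eq (fun m hm => ?_) f
  simp only [Fintype.card_fin] at hm
  exact (congrFun hsc m).trans ((h m hm).trans (congrFun hsc' m).symm)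

theorem momentMap_injective [CompletelyRegularSpace X] [T1Space X]
    (hL : Continuous[ptTop unitInterval, ptTop X] L) (hLs : Surjective L) :
    Injective (momentMap L) := fun x y h => by
  obtain ⟨n, hx⟩ := exists_mem_momentLevel hL x
  exact eq_of_mem_momentLevel hL hLs hx (show momentMap L y ∈ boundedMoments n from h ▸ hx)
    fun m _ => congrFun h m

theorem finDimSpace_momentLevel [CompactSpace X] [CompletelyRegularSpace X] [T1Space X]
    (hL : Continuous[ptTop unitInterval, ptTop X] L) (hLs : Surjective L) (n : ℕ) :
    FinDimSpace (momentLevel L n) := by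
  have := isCompact_iff_compactSpace.1 (isClosed_momentLevel L n).isCompact
  exact ⟨_, covDimLE_of_continuous_injective
    (q := fun y (j : Fin (n + n)) => momentMap L y j)
    (continuous_pi fun j => ((continuous_apply _).comp (continuous_momentMap L)).comp
      continuous_subtype_val)
    fun y y' h => Subtype.ext (eq_of_mem_momentLevel hL hLs y.2 y'.2 fun m hm =>
      congrFun h ⟨m, hm⟩)⟩

end Moments

theorem compactSpace_and_metrizableSpace_of_continuous_surjective {X : Type*}
    [TopologicalSpace X] [T35Space X] {L : C(unitInterval, ℝ) →ₗ[ℝ] C(X, ℝ)}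
    (hL : Continuous[ptTop unitInterval, ptTop X] L) (hLs : Surjective L) :
    CompactSpace X ∧ TopologicalSpace.MetrizableSpace X := by
  -- `ℕ → EReal` is a compact metrizable space containing `ℝ^ℕ`.
  let e : X → ℕ → EReal := fun x m => momentMap L x m
  have he : Continuous e := continuous_pi fun m =>
    continuous_coe_real_ereal.comp ((continuous_apply m).comp (continuous_momentMap L))
  have he_inj : Injective e := fun x y h =>
    momentMap_injective hL hLs (funext fun m => EReal.coe_injective (congrFun h m))
  have := countablyCompactSpace_of_locallyFinite he he_inj
    fun _ hU hlf => exists_empty_of_locallyFinite hL hLs hU hlf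
  have hemb := isClosedEmbedding_of_countablyCompactSpace he he_inj
  exact ⟨hemb.compactSpace, hemb.isEmbedding.metrizableSpace⟩

/-- a Tychonoff space ℓ-dominated by the unit interval is compact,
metrizable and strongly countable dimensional. -/
theorem compact_metrizable_scd_of_ellDominated_by_unitInterval
    (X : Type*) [TopologicalSpace X] [T35Space X]
    (h : LDominates unitInterval X) :
    CompactSpace X ∧ TopologicalSpace.MetrizableSpace X ∧ StronglyCountableDim X := by
  obtain ⟨L, hL, hLs⟩ := h
  obtain ⟨hcompact, hmetrizable⟩ := compactSpace_and_metrizableSpace_of_continuous_surjective hL hLs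
  exact ⟨hcompact, hmetrizable, momentLevel L, isClosed_momentLevel L,
    finDimSpace_momentLevel hL hLs,
    eq_univ_of_forall fun x => mem_iUnion.2 (exists_mem_momentLevel hL x)⟩

end
end

section
/- Suppose A₁ ⊆ K₁ ⊆ K₁' and A₂ ⊆ K₂' ⊆ K₂, where all spaces are compact metrizable, A₁ is closed in K₁, K₁ is closed in K₁', A₂ is closed in K₂', and K₂' is closed in K₂. If L : C_p(K₁;A₁) → C_p(K₂;A₂) is c-good, then the map L' : C_p(K₁';A₁) → C_p(K₂';A₂) defined by L'(g) = L(g↾K₁)↾K₂' is also c-good. -/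
open Set Function

noncomputable section

/-- Restriction of a function vanishing on `A` to a subset `S`, landing in the
functions on `S` vanishing on (the preimage of) `A`. -/
def Czero.restrictTo {X : Type*} [TopologicalSpace X] {A : Set X} (S : Set X)
    (g : Czero X A) : Czero ↥S ((Subtype.val : ↥S → X) ⁻¹' A) :=
  ⟨ContinuousMap.restrict S (g : C(X, ℝ)), by
    intro x hx
    exact g.2 x.1 hx⟩

section Aux
open TopologicalSpace BoundedContinuousFunction

lemma czero_apply_continuous {X : Type*} [TopologicalSpace X] {A : Set X} (x : X) :
    @Continuous _ _ (ptTopSub A) _ (fun f : Czero X A => ((f : C(X, ℝ)) x)) := by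
  letI : TopologicalSpace C(X, ℝ) := ptTop X
  letI : TopologicalSpace (Czero X A) := ptTopSub A
  have h1 : @Continuous _ _ (ptTopSub A) (ptTop X) (fun f : Czero X A => (f : C(X, ℝ))) :=
    continuous_induced_dom
  have h2 : @Continuous _ _ (ptTop X) _ (fun f : C(X, ℝ) => (f : X → ℝ)) :=
    continuous_induced_dom
  exact (continuous_apply x).comp (h2.comp h1)

lemma continuous_into_ptTopSub {Z : Type*} [tZ : TopologicalSpace Z] {X : Type*}
    [TopologicalSpace X] {A : Set X} (F : Z → Czero X A)
    (h : ∀ x : X, Continuous (fun z => ((F z : C(X, ℝ)) x))) :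
    @Continuous _ _ tZ (ptTopSub A) F := by
  rw [ptTopSub]
  apply continuous_induced_rng.2
  rw [ptTop]
  apply continuous_induced_rng.2
  exact continuous_pi h

lemma continuous_restrictTo {X : Type*} [TopologicalSpace X] {A : Set X} (S : Set X) :
    @Continuous _ _ (ptTopSub A) (ptTopSub ((Subtype.val : ↥S → X) ⁻¹' A))
      (Czero.restrictTo S) := by
  letI : TopologicalSpace (Czero X A) := ptTopSub A
  apply @continuous_into_ptTopSub _ (ptTopSub A)
  intro x
  exact czero_apply_continuous (A := A) x.1

lemma norm_restrictTo_le {X : Type*} [TopologicalSpace X] [CompactSpace X] {A : Set X}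
    (S : Set X) [CompactSpace ↥S] (g : Czero X A) :
    ‖(Czero.restrictTo S g : C(↥S, ℝ))‖ ≤ ‖(g : C(X, ℝ))‖ := by
  apply (ContinuousMap.norm_le _ (norm_nonneg _)).2
  intro x
  exact ContinuousMap.norm_coe_le_norm (g : C(X, ℝ)) x.1

lemma exists_czero_extension {X : Type*} [TopologicalSpace X] [CompactSpace X] [NormalSpace X]
    {S : Set X} (hS : IsClosed S) [CompactSpace ↥S] {A : Set X} (hAS : A ⊆ S)
    (f : Czero ↥S ((Subtype.val : ↥S → X) ⁻¹' A)) :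
    ∃ g : Czero X A, Czero.restrictTo S g = f ∧
      ‖(g : C(X, ℝ))‖ = ‖(f : C(↥S, ℝ))‖ := by
  obtain ⟨G, hGn, hGe⟩ :=
    BoundedContinuousFunction.exists_extension_norm_eq_of_isClosedEmbedding
      (BoundedContinuousFunction.mkOfCompact (f : C(↥S, ℝ)))
      hS.isClosedEmbedding_subtypeVal
  have hval : ∀ y : S, G y.1 = (f : C(↥S, ℝ)) y := by
    intro y
    have := congrFun hGe y
    simpa using this
  refine ⟨⟨G.toContinuousMap, ?_⟩, ?_, ?_⟩
  · intro x hx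
    have h0 : (f : C(↥S, ℝ)) ⟨x, hAS hx⟩ = 0 := f.2 ⟨x, hAS hx⟩ hx
    simpa [h0] using hval ⟨x, hAS hx⟩
  · apply Subtype.ext
    apply ContinuousMap.ext
    intro y
    exact hval y
  · rw [show ‖(f : C(↥S, ℝ))‖ = ‖BoundedContinuousFunction.mkOfCompact (f : C(↥S, ℝ))‖ from
      (BoundedContinuousFunction.norm_mkOfCompact _).symm, ← hGn]
    exact BoundedContinuousFunction.norm_toContinuousMap_eq G

end Aux

/-- a c-good map remains c-good after extending the domain space and
restricting the range space. -/
theorem isCGood_restrict_extend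
    {K₁' K₂ : Type*} [TopologicalSpace K₁'] [CompactSpace K₁']
    [TopologicalSpace.MetrizableSpace K₁']
    [TopologicalSpace K₂] [CompactSpace K₂] [TopologicalSpace.MetrizableSpace K₂]
    (K₁ A₁ : Set K₁') (hA₁K₁ : A₁ ⊆ K₁) (hA₁ : IsClosed A₁) (hK₁ : IsClosed K₁)
    (K₂' A₂ : Set K₂) (hA₂K₂ : A₂ ⊆ K₂') (hA₂ : IsClosed A₂) (hK₂' : IsClosed K₂')
    [CompactSpace ↥K₁] [CompactSpace ↥K₂']
    (c : ℝ)
    (L : Czero ↥K₁ ((Subtype.val : ↥K₁ → K₁') ⁻¹' A₁) →ₗ[ℝ] Czero K₂ A₂)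
    (hL : IsCGood ((Subtype.val : ↥K₁ → K₁') ⁻¹' A₁) A₂ c L)
    (L' : Czero K₁' A₁ →ₗ[ℝ] Czero ↥K₂' ((Subtype.val : ↥K₂' → K₂) ⁻¹' A₂))
    (hL' : ∀ g : Czero K₁' A₁,
      L' g = Czero.restrictTo K₂' (L (Czero.restrictTo K₁ g))) :
    IsCGood A₁ ((Subtype.val : ↥K₂' → K₂) ⁻¹' A₂) c L' := by
  haveI : NormalSpace K₁' := by
    letI := TopologicalSpace.metrizableSpaceMetric K₁'
    infer_instance
  haveI : NormalSpace K₂ := by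
    letI := TopologicalSpace.metrizableSpaceMetric K₂
    infer_instance
  obtain ⟨hLc, hLn, hLs⟩ := hL
  refine ⟨?_, ?_, ?_⟩
  · letI : TopologicalSpace (Czero K₁' A₁) := ptTopSub A₁
    letI : TopologicalSpace (Czero (↥K₁) ((Subtype.val : ↥K₁ → K₁') ⁻¹' A₁)) :=
      ptTopSub ((Subtype.val : ↥K₁ → K₁') ⁻¹' A₁)
    letI : TopologicalSpace (Czero K₂ A₂) := ptTopSub A₂
    apply @continuous_into_ptTopSub _ (ptTopSub A₁)
    intro x
    have key : (fun g : Czero K₁' A₁ => ((L' g : C(↥K₂', ℝ)) x)) =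
        fun g => ((L (Czero.restrictTo K₁ g) : C(K₂, ℝ)) x.1) := by
      funext g; rw [hL' g]; rfl
    rw [key]
    exact ((czero_apply_continuous (A := A₂) x.1).comp hLc).comp (continuous_restrictTo K₁)
  · intro g
    rw [hL' g]
    calc ‖(Czero.restrictTo K₂' (L (Czero.restrictTo K₁ g)) : C(↥K₂', ℝ))‖
        ≤ ‖(L (Czero.restrictTo K₁ g) : C(K₂, ℝ))‖ := norm_restrictTo_le _ _
      _ ≤ ‖(Czero.restrictTo K₁ g : C(↥K₁, ℝ))‖ := hLn _
      _ ≤ ‖(g : C(K₁', ℝ))‖ := norm_restrictTo_le _ _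
  · intro f
    obtain ⟨ftil, hfe, hfn⟩ := exists_czero_extension hK₂' hA₂K₂ f
    obtain ⟨g, hLg, hgn⟩ := hLs ftil
    obtain ⟨g', hge, hgn'⟩ := exists_czero_extension hK₁ hA₁K₁ g
    refine ⟨g', ?_, ?_⟩
    · rw [hL' g', hge, hLg, hfe]
    · rw [hgn', ← hfn]
      exact hgn


end
end

section
/- The real line ℝ ℓ-dominates a Tychonoff space X if X is submetrizable and has a k_ω sequence (K_n)_n such that each K_n is ℓ-dominated by the closed unit interval I = [0,1]. -/
open Set Function

noncomputable section

/-!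
Each `K n` is metrizable: `C_p(K n)` is a continuous image of the separable space `C(I, ℝ)`, so
countably many continuous functions separate its points. Dugundji's construction then gives linear
extension operators `E n : C_p(K n) → C_p(K (n + 1))` that are continuous for the pointwise
topology. If `S n : C_p(Σ n, I) → C_p(K n)` is a surjection factoring through restriction to the
`n`-th summand, the maps `Φ 0 = S 0`, `Φ (n + 1) = E n ∘ Φ n + (id - E n ∘ res) ∘ S (n + 1)` are
compatible with restriction, so by the k_ω property they glue to a continuous linear map
`C_p(Σ n, I) → C_p(X)`; it is onto because functions on distinct summands can be prescribed
independently. Finally `Σ n, I` is a closed subspace of `ℝ` via `(n, s) ↦ 2n + s`, and by Tietze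
`ℝ` ℓ-dominates its closed subspaces.
-/

open Topology Metric TopologicalSpace

namespace ContinuousMap

variable {A B : Type*} [TopologicalSpace A] [TopologicalSpace B]

def compRightLinearMap (φ : C(A, B)) : C(B, ℝ) →ₗ[ℝ] C(A, ℝ) :=
  (compRightAlgHom ℝ ℝ φ).toLinearMap

end ContinuousMap

open ContinuousMap

/-- `Continuous.comp` with the topologies as ordinary implicit arguments, so that they are not
overridden by the compact-open instance on `C(A, ℝ)`. -/
theorem Continuous.comp_explicit {α β γ : Type*} {tα : TopologicalSpace α}
    {tβ : TopologicalSpace β} {tγ : TopologicalSpace γ} {g : β → γ} {f : α → β}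
    (hg : Continuous[tβ, tγ] g) (hf : Continuous[tα, tβ] f) : Continuous[tα, tγ] (g ∘ f) :=
  hg.comp hf

section PointwiseTopology

variable {A B Z : Type*} [TopologicalSpace A] [TopologicalSpace B] {t : TopologicalSpace Z}

theorem continuous_ptTop_iff {F : Z → C(A, ℝ)} :
    Continuous[t, ptTop A] F ↔ ∀ a, Continuous[t, inferInstance] fun z => F z a := by
  rw [ptTop, continuous_induced_rng, continuous_pi_iff]
  rfl

theorem continuous_ptTop_eval (a : A) :
    Continuous[ptTop A, inferInstance] fun f : C(A, ℝ) => f a :=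
  continuous_ptTop_iff.1 (@continuous_id _ (ptTop A)) a

theorem continuous_ptTop_add {F G : Z → C(A, ℝ)} (hF : Continuous[t, ptTop A] F)
    (hG : Continuous[t, ptTop A] G) : Continuous[t, ptTop A] (F + G) :=
  continuous_ptTop_iff.2 fun a => (continuous_ptTop_iff.1 hF a).add (continuous_ptTop_iff.1 hG a)

theorem continuous_ptTop_sub {F G : Z → C(A, ℝ)} (hF : Continuous[t, ptTop A] F)
    (hG : Continuous[t, ptTop A] G) : Continuous[t, ptTop A] (F - G) :=
  continuous_ptTop_iff.2 fun a => (continuous_ptTop_iff.1 hF a).sub (continuous_ptTop_iff.1 hG a)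

theorem continuous_ptTop_compRightLinearMap (φ : C(A, B)) :
    Continuous[ptTop B, ptTop A] (compRightLinearMap φ) :=
  continuous_ptTop_iff.2 fun a => continuous_ptTop_eval (φ a)

end PointwiseTopology

theorem LDominates.trans {X Y Z : Type*} [TopologicalSpace X] [TopologicalSpace Y]
    [TopologicalSpace Z] (hXY : LDominates X Y) (hYZ : LDominates Y Z) : LDominates X Z := by
  obtain ⟨L, hLc, hLs⟩ := hXY
  obtain ⟨M, hMc, hMs⟩ := hYZ
  exact ⟨M ∘ₗ L, hMc.comp_explicit hLc, hMs.comp hLs⟩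

theorem ldominates_of_isClosedEmbedding {A Y : Type*} [TopologicalSpace A] [TopologicalSpace Y]
    [NormalSpace Y] {e : A → Y} (he : IsClosedEmbedding e) : LDominates Y A :=
  ⟨compRightLinearMap ⟨e, he.continuous⟩, continuous_ptTop_compRightLinearMap _,
    fun f => f.exists_extension he⟩

theorem LDominates.metrizableSpace {Y K : Type*} [TopologicalSpace Y] [SeparableSpace C(Y, ℝ)]
    [TopologicalSpace K] [CompactSpace K] [T2Space K] (h : LDominates Y K) :
    MetrizableSpace K := by
  obtain ⟨L, hLc, hLs⟩ := h
  obtain ⟨D, hDc, hDd⟩ := exists_countable_dense C(Y, ℝ)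
  have hco : Continuous[inferInstance, ptTop Y] (id : C(Y, ℝ) → C(Y, ℝ)) :=
    continuous_ptTop_iff.2 fun y => continuous_eval_const y
  have hsep : ∀ x y : K, x ≠ y → ∃ g ∈ L '' D, g x ≠ g y := by
    intro x y hxy
    let _ := ptTop K
    have hLD : Dense (L '' D) := hLs.denseRange.dense_image (hLc.comp_explicit hco) hDd
    obtain ⟨f, hfx, hfy, -⟩ := exists_continuous_zero_one_of_isClosed isClosed_singleton
      isClosed_singleton (disjoint_singleton.2 hxy)
    obtain ⟨g, hgD, hg⟩ := hLD.exists_mem_open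
      (isOpen_ne_fun (continuous_ptTop_eval x) (continuous_ptTop_eval y))
      ⟨f, by simp [hfx rfl, hfy rfl]⟩
    exact ⟨g, hgD, hg⟩
  have : Countable (L '' D) := (hDc.image L).to_subtype
  have hinj : Injective fun (x : K) (g : L '' D) => g.1 x := by
    intro x y hxy
    by_contra hne
    obtain ⟨g, hgD, hg⟩ := hsep x y hne
    exact hg (congrFun hxy ⟨g, hgD⟩)
  exact ((continuous_pi fun g => g.1.continuous).isClosedEmbedding hinj).isEmbedding.metrizableSpace

section Dugundji

variable {M : Type*} [MetricSpace M] {K : Set M}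

theorem dist_lt_six_mul_of_dist_lt_infDist {x y c a : M} (hx : x ∈ K)
    (hyc : dist y c < infDist c K / 2) (hca : dist c a < 2 * infDist c K) :
    dist a x < 6 * dist y x := by
  have hcx := infDist_le_dist_of_mem (x := c) hx
  have hcyx := dist_triangle c y x
  have hacyx := dist_triangle4 a c y x
  rw [dist_comm c y] at hcyx hacyx
  rw [dist_comm a c] at hacyx
  linarith

theorem exists_dugundji_data (hK : IsClosed K) (hne : K.Nonempty) :
    ∃ (p : PartitionOfUnity (↥Kᶜ) (↥Kᶜ) univ) (a : ↥Kᶜ → K),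
      (∀ i z : ↥Kᶜ, p i z ≠ 0 → dist (z : M) i < infDist (i : M) K / 2) ∧
      ∀ i : ↥Kᶜ, dist (i : M) (a i) < 2 * infDist (i : M) K := by
  have hpos : ∀ c : ↥Kᶜ, 0 < infDist (c : M) K := fun c =>
    (hK.notMem_iff_infDist_pos hne).1 c.2
  obtain ⟨p, hp⟩ := PartitionOfUnity.exists_isSubordinate isClosed_univ
    (fun c : ↥Kᶜ => ball c (infDist (c : M) K / 2)) (fun _ => isOpen_ball)
    fun z _ => mem_iUnion.2 ⟨z, mem_ball_self (half_pos (hpos z))⟩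
  have ha : ∀ c : ↥Kᶜ, ∃ a : K, dist (c : M) a < 2 * infDist (c : M) K := fun c => by
    obtain ⟨a, haK, hca⟩ := (infDist_lt_iff hne).1 (lt_two_mul_self (hpos c))
    exact ⟨⟨a, haK⟩, hca⟩
  choose a ha using ha
  exact ⟨p, a, fun i z hz => hp i (subset_closure hz), ha⟩

variable (p : PartitionOfUnity (↥Kᶜ) (↥Kᶜ) univ) (a : ↥Kᶜ → K)

open scoped Classical in
def dugundjiExtend (f : C(K, ℝ)) (x : M) : ℝ :=
  if hx : x ∈ K then f ⟨x, hx⟩ else ∑ i ∈ p.finsupport ⟨x, hx⟩, p i ⟨x, hx⟩ • f (a i)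

theorem dugundjiExtend_of_mem (f : C(K, ℝ)) {x : M} (hx : x ∈ K) :
    dugundjiExtend p a f x = f ⟨x, hx⟩ :=
  dif_pos hx

theorem dugundjiExtend_of_notMem (f : C(K, ℝ)) {x : M} (hx : x ∉ K) :
    dugundjiExtend p a f x = ∑ᶠ i, p i ⟨x, hx⟩ • f (a i) :=
  (dif_neg hx).trans (p.sum_finsupport_smul_eq_finsum fun i _ => f (a i))

theorem continuousAt_dugundjiExtend_of_mem
    (hp : ∀ i z : ↥Kᶜ, p i z ≠ 0 → dist (z : M) i < infDist (i : M) K / 2)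
    (ha : ∀ i : ↥Kᶜ, dist (i : M) (a i) < 2 * infDist (i : M) K) (f : C(K, ℝ)) {x : M}
    (hx : x ∈ K) :
    ContinuousAt (dugundjiExtend p a f) x := by
  rw [Metric.continuousAt_iff]
  intro ε hε
  obtain ⟨δ, hδ, hf⟩ := Metric.continuousAt_iff.1 f.continuous.continuousAt ε hε
  refine ⟨δ / 6, by positivity, fun {y} hy => ?_⟩
  rw [dugundjiExtend_of_mem p a f hx]
  by_cases hyK : y ∈ K
  · rw [dugundjiExtend_of_mem p a f hyK]
    exact hf (lt_of_lt_of_le hy (by linarith))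
  · rw [dugundjiExtend_of_notMem p a f hyK, ← mem_ball]
    -- off `K`, the value is a convex combination of values of `f` at points `6 * dist y x`-close
    -- to `x`
    refine p.finsum_smul_mem_convex (g := fun i _ => f (a i)) (mem_univ _) (fun i hi => hf ?_)
      (convex_ball _ _)
    have := dist_lt_six_mul_of_dist_lt_infDist hx (hp i _ hi) (ha i)
    rw [Subtype.dist_eq]
    linarith

theorem continuousOn_dugundjiExtend_compl (f : C(K, ℝ)) :
    ContinuousOn (dugundjiExtend p a f) Kᶜ := by
  rw [continuousOn_iff_continuous_domRestrict]
  have : Kᶜ.domRestrict (dugundjiExtend p a f) = fun z => ∑ᶠ i, p i z • f (a i) :=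
    funext fun z => dugundjiExtend_of_notMem p a f z.2
  rw [this]
  exact p.continuous_finsum_smul fun i _ _ => continuousAt_const

theorem exists_linear_extension_ptTop (hK : IsClosed K) :
    ∃ E : C(K, ℝ) →ₗ[ℝ] C(M, ℝ), (∀ f (x : K), E f x = f x) ∧ Continuous[ptTop K, ptTop M] E := by
  rcases K.eq_empty_or_nonempty with rfl | hne
  · exact ⟨0, fun f x => x.2.elim, @continuous_const _ _ (ptTop _) (ptTop M) 0⟩
  obtain ⟨p, a, hp, ha⟩ := exists_dugundji_data hK hne
  have hcont : ∀ f, Continuous (dugundjiExtend p a f) := fun f =>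
    continuous_iff_continuousAt.2 fun x => by
      by_cases hx : x ∈ K
      · exact continuousAt_dugundjiExtend_of_mem p a hp ha f hx
      · exact (continuousOn_dugundjiExtend_compl p a f).continuousAt
          (hK.isOpen_compl.mem_nhds hx)
  refine ⟨{ toFun := fun f => ⟨dugundjiExtend p a f, hcont f⟩, map_add' := ?_, map_smul' := ?_ },
    fun f x => dugundjiExtend_of_mem p a f x.2, continuous_ptTop_iff.2 fun x => ?_⟩
  · intro f g
    ext x
    by_cases hx : x ∈ K <;> simp [dugundjiExtend, hx, mul_add, Finset.sum_add_distrib]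
  · intro c f
    ext x
    by_cases hx : x ∈ K <;> simp [dugundjiExtend, hx, Finset.mul_sum, mul_left_comm]
  · let _ := ptTop K
    by_cases hx : x ∈ K
    · simpa [dugundjiExtend, hx] using continuous_ptTop_eval _
    · simpa [dugundjiExtend, hx] using
        continuous_finsetSum _ fun i _ => continuous_const.mul (continuous_ptTop_eval (a i))

theorem exists_linear_extension_ptTop_of_isClosedEmbedding {A N : Type*} [TopologicalSpace A]
    [TopologicalSpace N] [MetrizableSpace N] {e : A → N} (he : IsClosedEmbedding e) :
    ∃ E : C(A, ℝ) →ₗ[ℝ] C(N, ℝ), (∀ f a, E f (e a) = f a) ∧ Continuous[ptTop A, ptTop N] E := by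
  let _ := metrizableSpaceMetric N
  obtain ⟨E, hE, hEc⟩ := exists_linear_extension_ptTop he.isClosed_range
  let h : A ≃ₜ range e := he.isEmbedding.toHomeomorph
  refine ⟨E ∘ₗ compRightLinearMap h.symm, fun f a => ?_,
    hEc.comp_explicit (continuous_ptTop_compRightLinearMap _)⟩
  show E (f.comp h.symm) (h a) = f a
  simpa using hE (f.comp h.symm) (h a)

end Dugundji

section Tower

variable {R G : Type*} [Ring R] [AddCommGroup G] [Module R G] {V : ℕ → Type*}
  [∀ n, AddCommGroup (V n)] [∀ n, Module R (V n)]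
  (ρ : ∀ n, V (n + 1) →ₗ[R] V n) (E : ∀ n, V n →ₗ[R] V (n + 1)) (S : ∀ n, G →ₗ[R] V n)

/-- When `ρ n ∘ E n = id`, `id - E n ∘ ρ n` projects onto `ker (ρ n)`, so the correction added at
stage `n + 1` is invisible to `ρ n`. -/
def towerMap : ∀ n, G →ₗ[R] V n
  | 0 => S 0
  | n + 1 => E n ∘ₗ towerMap n + (LinearMap.id - E n ∘ₗ ρ n) ∘ₗ S (n + 1)

variable {ρ E} (hE : ∀ n v, ρ n (E n v) = v)
include hE

theorem towerMap_succ_restrict (n : ℕ) (g : G) :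
    ρ n (towerMap ρ E S (n + 1) g) = towerMap ρ E S n g := by
  simp [towerMap, hE]

theorem exists_towerMap_eq {S : ∀ n, G →ₗ[R] V n} (hS : ∀ v : ∀ n, V n, ∃ g, ∀ n, S n g = v n)
    (w : ∀ n, V n) (hw : ∀ n, ρ n (w (n + 1)) = w n) : ∃ g, ∀ n, towerMap ρ E S n g = w n := by
  obtain ⟨g, hg⟩ := hS fun | 0 => w 0 | n + 1 => w (n + 1) - E n (w n)
  refine ⟨g, fun n => ?_⟩
  induction n with
  | zero => exact hg 0
  | succ n ih => simp [towerMap, ih, hg (n + 1), hw, hE]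

end Tower

namespace IsKOmegaSeq

variable {X : Type*} [TopologicalSpace X] {K : ℕ → Set X} (hK : IsKOmegaSeq X K)
include hK

theorem monotone : Monotone K :=
  monotone_nat_of_le_succ hK.2.1

theorem exists_mem (x : X) : ∃ n, x ∈ K n :=
  (hK.2.2.1 {x} isCompact_singleton).imp fun _ h => h rfl

theorem exists_continuousMap_restrict_eq (φ : ∀ n, C(K n, ℝ))
    (hφ : ∀ n (x : K n), φ (n + 1) (Set.inclusion (hK.2.1 n) x) = φ n x) :
    ∃ f : C(X, ℝ), ∀ n, f.restrict (K n) = φ n := by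
  have hcompat : ∀ m n (hmn : m ≤ n) (x : K m),
      φ n (Set.inclusion (hK.monotone hmn) x) = φ m x := by
    intro m n hmn
    induction n, hmn using Nat.le_induction with
    | base => exact fun x => rfl
    | succ n hmn ih => exact fun x => (hφ n _).trans (ih x)
  choose N hN using hK.exists_mem
  have hF : ∀ n (x : K n), φ (N x) ⟨x, hN x⟩ = φ n x := fun n x =>
    (hcompat _ _ (le_max_left (N x) n) ⟨x, hN x⟩).symm.trans
      (hcompat _ _ (le_max_right (N x) n) x)
  refine ⟨⟨fun x => φ (N x) ⟨x, hN x⟩, continuous_iff_isClosed.2 fun C hC => ?_⟩,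
    fun n => ContinuousMap.ext (hF n)⟩
  refine hK.2.2.2 _ fun n => ?_
  obtain ⟨T, hT, hTC⟩ := isClosed_induced_iff.1 (hC.preimage (φ n).continuous)
  refine ⟨T, hT, Set.ext fun x => and_congr_left fun hx => ?_⟩
  rw [mem_preimage, hF n ⟨x, hx⟩, ← mem_preimage, ← hTC, mem_preimage]

theorem ldominates_of_tower {Y : Type*} [TopologicalSpace Y]
    (Φ : ∀ n, C(Y, ℝ) →ₗ[ℝ] C(K n, ℝ)) (hΦc : ∀ n, Continuous[ptTop Y, ptTop (K n)] (Φ n))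
    (hΦ : ∀ n g (x : K n), Φ (n + 1) g (Set.inclusion (hK.2.1 n) x) = Φ n g x)
    (hsurj : ∀ f : C(X, ℝ), ∃ g, ∀ n, Φ n g = f.restrict (K n)) : LDominates Y X := by
  choose L hL using fun g => hK.exists_continuousMap_restrict_eq (Φ · g) (hΦ · g)
  have hLΦ : ∀ g n (x : K n), L g x = Φ n g x := fun g n x => DFunLike.congr_fun (hL g n) x
  refine ⟨{ toFun := L, map_add' := fun g h => ?_, map_smul' := fun c g => ?_ },
    continuous_ptTop_iff.2 fun x => ?_, fun f => ?_⟩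
  · ext x
    obtain ⟨n, hx⟩ := hK.exists_mem x
    simp [hLΦ _ n ⟨x, hx⟩]
  · ext x
    obtain ⟨n, hx⟩ := hK.exists_mem x
    simp [hLΦ _ n ⟨x, hx⟩]
  · obtain ⟨n, hx⟩ := hK.exists_mem x
    simpa only [LinearMap.coe_mk, AddHom.coe_mk, hLΦ _ n ⟨x, hx⟩]
      using continuous_ptTop_iff.1 (hΦc n) ⟨x, hx⟩
  · obtain ⟨g, hg⟩ := hsurj f
    refine ⟨g, ContinuousMap.ext fun x => ?_⟩
    obtain ⟨n, hx⟩ := hK.exists_mem x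
    simpa [hg] using hLΦ g n ⟨x, hx⟩

theorem ldominates_sigma [∀ n, MetrizableSpace (K n)] {Z : ℕ → Type*}
    [∀ n, TopologicalSpace (Z n)] (hdom : ∀ n, LDominates (Z n) (K n)) :
    LDominates (Σ n, Z n) X := by
  choose T hTc hTs using hdom
  have hemb : ∀ n, IsClosedEmbedding (Set.inclusion (hK.2.1 n)) := fun n =>
    have := isCompact_iff_compactSpace.1 (hK.1 n)
    (continuous_inclusion _).isClosedEmbedding (inclusion_injective _)
  choose E hE hEc using fun n => exists_linear_extension_ptTop_of_isClosedEmbedding (hemb n)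
  let ρ n : C(K (n + 1), ℝ) →ₗ[ℝ] C(K n, ℝ) := compRightLinearMap ⟨_, (hemb n).continuous⟩
  let S n : C(Σ n, Z n, ℝ) →ₗ[ℝ] C(K n, ℝ) := T n ∘ₗ compRightLinearMap (sigmaMk n)
  have hρE : ∀ n v, ρ n (E n v) = v := fun n v => ContinuousMap.ext (hE n v)
  have hSc : ∀ n, Continuous[ptTop _, ptTop (K n)] (S n) := fun n =>
    (hTc n).comp_explicit (continuous_ptTop_compRightLinearMap _)
  have hS : ∀ v : ∀ n, C(K n, ℝ), ∃ g, ∀ n, S n g = v n := fun v =>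
    ⟨ContinuousMap.sigma fun n => surjInv (hTs n) (v n), fun n => surjInv_eq (hTs n) (v n)⟩
  refine hK.ldominates_of_tower (towerMap ρ E S) (fun n => ?_)
    (fun n g x => DFunLike.congr_fun (towerMap_succ_restrict S hρE n g) x)
    fun f => exists_towerMap_eq hρE hS _ fun n => rfl
  induction n with
  | zero => exact hSc 0
  | succ n ih =>
    have hproj : Continuous[ptTop (K (n + 1)), ptTop (K (n + 1))] (id - E n ∘ ρ n) :=
      continuous_ptTop_sub (@continuous_id _ (ptTop _))
        ((hEc n).comp_explicit (continuous_ptTop_compRightLinearMap _))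
    exact continuous_ptTop_add ((hEc n).comp_explicit ih) (hproj.comp_explicit (hSc (n + 1)))

end IsKOmegaSeq

theorem isClosedEmbedding_sigma_unitInterval :
    IsClosedEmbedding fun p : Σ _ : ℕ, unitInterval => 2 * (p.1 : ℝ) + p.2 := by
  have hc : Continuous fun p : Σ _ : ℕ, unitInterval => 2 * (p.1 : ℝ) + p.2 :=
    continuous_sigma fun n => by fun_prop
  refine .of_continuous_injective_isClosedMap hc ?_ ?_
  · rintro ⟨m, s, hs0, hs1⟩ ⟨n, t, ht0, ht1⟩ h
    dsimp only at h
    obtain rfl : m = n := by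
      have h1 : (m : ℝ) < n + 1 := by linarith
      have h2 : (n : ℝ) < m + 1 := by linarith
      norm_cast at h1 h2
      omega
    obtain rfl : s = t := by linarith
    rfl
  · refine (isProperMap_iff_isCompact_preimage.2 ⟨hc, fun C hC => ?_⟩).isClosedMap
    obtain ⟨b, hb⟩ := hC.bddAbove
    obtain ⟨N, hN⟩ := exists_nat_gt b
    refine ((Finset.range N).isCompact_biUnion fun n _ =>
        isCompact_range (continuous_sigmaMk (i := n))).of_isClosed_subset
      (hC.isClosed.preimage hc) ?_
    rintro ⟨n, s, hs0, hs1⟩ hC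
    have : (n : ℝ) < N := by linarith [hb hC]
    exact mem_iUnion₂.2 ⟨n, Finset.mem_range.2 (mod_cast this), ⟨s, hs0, hs1⟩, rfl⟩

theorem real_ellDominates_of_kOmega_interval_dominated_general
    (X : Type*) [TopologicalSpace X] [T35Space X]
    (K : ℕ → Set X) (hK : IsKOmegaSeq X K)
    (hdom : ∀ n, LDominates unitInterval ↥(K n)) :
    LDominates ℝ X := by
  have (n : ℕ) : CompactSpace (K n) := isCompact_iff_compactSpace.1 (hK.1 n)
  have (n : ℕ) : MetrizableSpace (K n) := (hdom n).metrizableSpace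
  exact (ldominates_of_isClosedEmbedding isClosedEmbedding_sigma_unitInterval).trans
    (hK.ldominates_sigma hdom)

/-- the reals ℓ-dominate any submetrizable Tychonoff space with a k_ω
sequence of compacta each ℓ-dominated by the unit interval. -/
theorem real_ellDominates_of_kOmega_interval_dominated
    (X : Type*) [TopologicalSpace X] [T35Space X]
    (hsub : Submetrizable X) (K : ℕ → Set X) (hK : IsKOmegaSeq X K)
    (hdom : ∀ n, LDominates unitInterval ↥(K n)) :
    LDominates ℝ X :=
  real_ellDominates_of_kOmega_interval_dominated_general X K hK hdom
end
end

section
/- A compact metrizable space K is strongly countable dimensional if and only if K^[α] = ∅ for some countable ordinal α. -/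
open Set Function

noncomputable section

/-!
If `K = ⋃ Fₙ` with `Fₙ` closed and finite dimensional, Baire's theorem in a nonempty closed
`S ⊆ K` gives an open `W` with `∅ ≠ W ∩ S ⊆ Fₙ`; as a relatively open subset of the closed
finite-dimensional set `Fₙ ∩ S`, `W ∩ S` is finite dimensional, so `I(S) ≠ ∅`. Hence the derived
sets strictly decrease until they vanish, and in a second countable space a strictly decreasing
family of closed sets has countable length. Conversely, if `K^[α] = ∅` every point lies in some
`I(K^[β])` with `β < α`, and each `I(K^[β])` is a countable union of closed finite-dimensional
sets because `K` is hereditarily Lindelöf and open sets are `F_σ`.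

That a relatively open subset of a closed finite-dimensional set is finite dimensional is shown
directly, with the crude bound `3n + 2`: shrinkings of a cover on the closed level sets of a
function defining the open set are glued along slightly thicker level sets, each point lying in
at most three of them.
-/

section CoveringDimension

variable {X : Type*} [TopologicalSpace X]

theorem covDimLE_of_isEmpty [IsEmpty X] (n : ℕ) : CovDimLE X n :=
  fun _ U _ hU hcov => ⟨U, hU, fun _ => subset_rfl, hcov, isEmptyElim⟩

theorem covDimLE_subtype_iff {A : Set X} {n : ℕ} :
    CovDimLE A n ↔ ∀ (ι : Type) (W : ι → Set X), Finite ι → (∀ i, IsOpen (W i)) →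
      A ⊆ ⋃ i, W i → ∃ V : ι → Set X, (∀ i, IsOpen (V i)) ∧ (∀ i, V i ⊆ W i) ∧
        A ⊆ ⋃ i, V i ∧ ∀ x ∈ A, {i | x ∈ V i}.ncard ≤ n + 1 := by
  constructor
  · intro h ι W hι hW hAW
    obtain ⟨V, hVo, hVW, hVcov, hVmult⟩ := h ι (fun i => Subtype.val ⁻¹' W i) hι
      (fun i => (hW i).preimage continuous_subtype_val)
      (eq_univ_of_forall fun x => by simpa using hAW x.2)
    choose Z hZo hZV using fun i => isOpen_induced_iff.mp (hVo i)
    refine ⟨fun i => Z i ∩ W i, fun i => (hZo i).inter (hW i), fun i => inter_subset_right,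
      fun x hx => ?_, fun x hx => ?_⟩
    · obtain ⟨i, hi⟩ := mem_iUnion.mp (hVcov.symm ▸ mem_univ (⟨x, hx⟩ : A))
      rw [← hZV i] at hi
      exact mem_iUnion.mpr ⟨i, hi, hVW i (by rwa [← hZV i])⟩
    · refine (ncard_le_ncard (fun i hi => ?_)).trans (hVmult ⟨x, hx⟩)
      show (⟨x, hx⟩ : A) ∈ V i
      rw [← hZV i]
      exact hi.1
  · intro h ι U hι hU hcov
    choose W hWo hWU using fun i => isOpen_induced_iff.mp (hU i)
    obtain ⟨V, hVo, hVW, hAV, hmult⟩ := h ι W hι hWo fun x hx => by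
      obtain ⟨i, hi⟩ := mem_iUnion.mp (hcov.symm ▸ mem_univ (⟨x, hx⟩ : A))
      rw [← hWU i] at hi
      exact mem_iUnion.mpr ⟨i, hi⟩
    refine ⟨fun i => Subtype.val ⁻¹' V i, fun i => (hVo i).preimage continuous_subtype_val,
      fun i => hWU i ▸ preimage_mono (hVW i), eq_univ_of_forall fun x => ?_, fun x => hmult x x.2⟩
    simpa using hAV x.2

theorem CovDimLE.exists_shrink_of_isClosed {B C : Set X} {n : ℕ} (hB : CovDimLE B n)
    (hC : IsClosed C) (hCB : C ⊆ B) {ι : Type} [Finite ι] {W : ι → Set X}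
    (hW : ∀ i, IsOpen (W i)) (hCW : C ⊆ ⋃ i, W i) :
    ∃ V : ι → Set X, (∀ i, IsOpen (V i)) ∧ (∀ i, V i ⊆ W i) ∧ C ⊆ ⋃ i, V i ∧
      ∀ x ∈ B, {i | x ∈ V i}.ncard ≤ n + 1 := by
  have hcov : B ⊆ ⋃ j, Sum.elim W (fun _ : Unit => Cᶜ) j := fun x _ => by
    by_cases hx : x ∈ C
    · obtain ⟨i, hi⟩ := mem_iUnion.mp (hCW hx)
      exact mem_iUnion.mpr ⟨Sum.inl i, hi⟩
    · exact mem_iUnion.mpr ⟨Sum.inr (), hx⟩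
  obtain ⟨V, hVo, hVW, hBV, hmult⟩ := covDimLE_subtype_iff.mp hB (ι ⊕ Unit) _ inferInstance
    (by rintro (i | -); exacts [hW i, hC.isOpen_compl]) hcov
  refine ⟨V ∘ Sum.inl, fun i => hVo _, fun i => hVW (Sum.inl i), fun x hx => ?_,
    fun x hx => ?_⟩
  · obtain ⟨i | u, hi⟩ := mem_iUnion.mp (hBV (hCB hx))
    · exact mem_iUnion.mpr ⟨i, hi⟩
    · exact absurd hx (hVW _ hi)
  · exact (ncard_le_ncard_of_injOn Sum.inl (fun i hi => hi) Sum.inl_injective.injOn).trans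
      (hmult x hx)

theorem CovDimLE.mono_of_isClosed {A B : Set X} {n : ℕ} (hB : CovDimLE B n) (hA : IsClosed A)
    (hAB : A ⊆ B) : CovDimLE A n := by
  rw [covDimLE_subtype_iff]
  intro ι W _ hW hAW
  obtain ⟨V, hVo, hVW, hAV, hmult⟩ := hB.exists_shrink_of_isClosed hA hAB hW hAW
  exact ⟨V, hVo, hVW, hAV, fun x hx => hmult x (hAB hx)⟩

theorem CovDimLE.of_iUnion_isClosed {A B : Set X} {n : ℕ} (hB : CovDimLE B n) (hAB : A ⊆ B)
    {C R : ℕ → Set X} (hC : ∀ m, IsClosed (C m)) (hA : ⋃ m, C m = A)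
    (hR : ∀ m, IsOpen (R m)) (hCR : ∀ m, C m ⊆ R m)
    (hRR : ∀ x ∈ A, ∀ m m', x ∈ R m → x ∈ R m' → m' ≤ m + 2) : CovDimLE A (3 * n + 2) := by
  have hCA : ∀ m, C m ⊆ A := fun m => hA ▸ subset_iUnion C m
  rw [covDimLE_subtype_iff]
  intro ι W _ hW hAW
  choose Z hZo hZW hCZ hZmult using fun m =>
    hB.exists_shrink_of_isClosed (hC m) ((hCA m).trans hAB) hW ((hCA m).trans hAW)
  refine ⟨fun i => ⋃ m, Z m i ∩ R m, fun i => isOpen_iUnion fun m => (hZo m i).inter (hR m),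
    fun i => iUnion_subset fun m => inter_subset_left.trans (hZW m i), fun x hx => ?_,
    fun x hx => ?_⟩
  · obtain ⟨m, hm⟩ := mem_iUnion.mp (hA.symm ▸ hx)
    obtain ⟨i, hi⟩ := mem_iUnion.mp (hCZ m hm)
    exact mem_iUnion.mpr ⟨i, mem_iUnion.mpr ⟨m, hi, hCR m hm⟩⟩
  classical
  -- every `R m` containing `x` has index in `[m₀, m₀ + 2]`, so `x` meets at most three `Z m`
  have hex : ∃ m, x ∈ R m := by
    obtain ⟨m, hm⟩ := mem_iUnion.mp (hA.symm ▸ hx)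
    exact ⟨m, hCR m hm⟩
  set m₀ := Nat.find hex
  have hsub : {i | x ∈ ⋃ m, Z m i ∩ R m} ⊆
      {i | x ∈ Z m₀ i} ∪ {i | x ∈ Z (m₀ + 1) i} ∪ {i | x ∈ Z (m₀ + 2) i} := by
    intro i hi
    obtain ⟨m, hmZ, hmR⟩ := mem_iUnion.mp hi
    have hm₀m : m₀ ≤ m := Nat.find_min' hex hmR
    have hmm₀ : m ≤ m₀ + 2 := hRR x hx _ _ (Nat.find_spec hex) hmR
    obtain rfl | rfl | rfl : m = m₀ ∨ m = m₀ + 1 ∨ m = m₀ + 2 := by omega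
    exacts [Or.inl (Or.inl hmZ), Or.inl (Or.inr hmZ), Or.inr hmZ]
  have hxB := hAB hx
  calc {i | x ∈ ⋃ m, Z m i ∩ R m}.ncard
      ≤ {i | x ∈ Z m₀ i}.ncard + {i | x ∈ Z (m₀ + 1) i}.ncard + {i | x ∈ Z (m₀ + 2) i}.ncard :=
        (ncard_le_ncard hsub).trans <| (ncard_union_le _ _).trans <|
          Nat.add_le_add_right (ncard_union_le _ _) _
    _ ≤ 3 * n + 2 + 1 := by
        have := hZmult m₀ x hxB
        have := hZmult (m₀ + 1) x hxB
        have := hZmult (m₀ + 2) x hxB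
        omega

theorem CovDimLE.inter_setOf_pos {B : Set X} {n : ℕ} (hB : CovDimLE B n) (hBc : IsClosed B)
    {g : X → ℝ} (hg : Continuous g) : CovDimLE ↥(B ∩ {x | 0 < g x}) (3 * n + 2) := by
  -- the pieces are the level sets `m ≤ 1 / g ≤ m + 1`, thickened to `m - 1 < 1 / g < m + 2`
  refine hB.of_iUnion_isClosed inter_subset_left
    (C := fun m : ℕ => B ∩ {x | 1 ≤ (m + 1) * g x} ∩ {x | m * g x ≤ 1})
    (R := fun m : ℕ => {x | 1 < (m + 2) * g x} ∩ {x | (m - 1) * g x < 1})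
    (fun m => (hBc.inter (isClosed_le continuous_const (by fun_prop))).inter
      (isClosed_le (by fun_prop) continuous_const)) ?_
    (fun m => (isOpen_lt continuous_const (by fun_prop)).inter
      (isOpen_lt (by fun_prop) continuous_const)) ?_ ?_
  · ext x
    simp only [mem_iUnion, mem_inter_iff, mem_ofPred_eq]
    constructor
    · rintro ⟨m, ⟨hxB, h1⟩, -⟩
      exact ⟨hxB, by nlinarith⟩
    · rintro ⟨hxB, hgx⟩
      refine ⟨⌊(g x)⁻¹⌋₊, ⟨hxB, ?_⟩, ?_⟩
      · have := Nat.lt_floor_add_one (g x)⁻¹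
        rw [← div_le_iff₀ hgx]; linarith [one_div (g x)]
      · have := Nat.floor_le (inv_nonneg.mpr hgx.le)
        rw [← le_div_iff₀ hgx]; linarith [one_div (g x)]
  · rintro m x ⟨⟨-, h1⟩, h2⟩
    simp only [mem_inter_iff, mem_ofPred_eq] at *
    have : 0 < g x := by nlinarith
    constructor <;> nlinarith
  · rintro x - m m' ⟨h1, -⟩ ⟨-, h2⟩
    simp only [mem_ofPred_eq] at *
    by_contra! h
    have : ((m : ℝ) + 3) ≤ m' := by exact_mod_cast h
    nlinarith

theorem CovDimLE.inter_isOpen [PerfectlyNormalSpace X] {B O : Set X} {n : ℕ}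
    (hB : CovDimLE B n) (hBc : IsClosed B) (hO : IsOpen O) : CovDimLE ↥(B ∩ O) (3 * n + 2) := by
  obtain ⟨g, hg, hg01⟩ :=
    perfectlyNormalSpace_iff_forall_isClosed_preimage_zero.mp ‹_› _ hO.isClosed_compl
  have hO : O = {x | 0 < g x} := by
    ext x
    rw [← not_iff_not, ← mem_compl_iff, hg, mem_preimage, mem_singleton_iff, mem_ofPred_eq,
      not_lt]
    exact ⟨le_of_eq, fun h => le_antisymm h (hg01 x).1⟩
  exact hO ▸ hB.inter_setOf_pos hBc g.continuous

end CoveringDimension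

section DerivedSets

variable (X : Type*) [TopologicalSpace X]

theorem fdDerived_zero : fdDerived X 0 = univ :=
  Ordinal.limitRecOn_zero _ _ _

theorem fdDerived_add_one (o : Ordinal) :
    fdDerived X (o + 1) = fdDerived X o \ fdI X (fdDerived X o) :=
  Ordinal.limitRecOn_add_one _ _ _ _

theorem fdDerived_limit {o : Ordinal} (ho : Order.IsSuccLimit o) :
    fdDerived X o = ⋂ o' < o, fdDerived X o' :=
  Ordinal.limitRecOn_limit _ _ _ _ ho

variable {X}

theorem IsClosed.diff_fdI {S : Set X} (hS : IsClosed S) : IsClosed (S \ fdI X S) := by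
  have : S \ fdI X S = S \ ⋃₀ {U | IsOpen U ∧ FinDimSpace ↥(U ∩ S)} := by
    ext x
    simp only [fdI, mem_sdiff, mem_sUnion, mem_ofPred_eq]
    exact and_congr_right fun hx => by
      simp only [hx, true_and, not_exists, not_and, and_imp]
      exact ⟨fun h U hU hfd hxU => h U hU hxU hfd, fun h U hU hxU hfd => h U hU hfd hxU⟩
  exact this ▸ hS.sdiff (isOpen_sUnion fun U hU => hU.1)

variable (X)

theorem isClosed_fdDerived (o : Ordinal) : IsClosed (fdDerived X o) := by
  induction o using Ordinal.limitRecOn with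
  | zero => exact fdDerived_zero X ▸ isClosed_univ
  | add_one o ih => exact (fdDerived_add_one X o).symm ▸ ih.diff_fdI
  | limit o ho ih =>
    rw [fdDerived_limit X ho]
    exact isClosed_biInter ih

theorem antitone_fdDerived : Antitone (fdDerived X) := by
  intro a b hab
  induction b using Ordinal.limitRecOn with
  | zero => rw [nonpos_iff_eq_zero.mp hab]
  | add_one b ih =>
    rcases hab.eq_or_lt with rfl | hlt
    · rfl
    · rw [fdDerived_add_one]
      exact sdiff_subset.trans (ih (Order.lt_add_one_iff.mp hlt))
  | limit b hb ih =>
    rcases hab.eq_or_lt with rfl | hlt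
    · rfl
    · rw [fdDerived_limit X hb]
      exact biInter_subset_of_mem hlt

theorem compl_fdDerived_subset (γ : Ordinal) :
    (fdDerived X γ)ᶜ ⊆ ⋃ β ∈ Iio γ, fdI X (fdDerived X β) := by
  induction γ using Ordinal.limitRecOn with
  | zero => simp [fdDerived_zero]
  | add_one γ ih =>
    intro x hx
    by_cases hxγ : x ∈ fdDerived X γ
    · have hxI : x ∈ fdI X (fdDerived X γ) := by
        by_contra h
        exact hx ((fdDerived_add_one X γ).symm ▸ ⟨hxγ, h⟩)
      exact mem_biUnion (mem_Iio.mpr (lt_add_one _)) hxI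
    · exact biUnion_subset_biUnion_left (Iio_subset_Iio ((lt_add_one _).le)) (ih hxγ)
  | limit γ hγ ih =>
    intro x hx
    rw [fdDerived_limit X hγ, mem_compl_iff, mem_iInter₂, not_forall₂] at hx
    obtain ⟨δ, hδγ, hxδ⟩ := hx
    exact biUnion_subset_biUnion_left (Iio_subset_Iio hδγ.le) (ih δ hδγ hxδ)

end DerivedSets

open Cardinal in
theorem exists_card_le_aleph0_add_one_eq {X : Type*} [TopologicalSpace X]
    [SecondCountableTopology X] {f : Ordinal → Set X} (hf : Antitone f)
    (hc : ∀ α, IsClosed (f α)) : ∃ α : Ordinal, α.card ≤ ℵ₀ ∧ f (α + 1) = f α := by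
  by_contra! h
  obtain ⟨b, hbc, -, hb⟩ := TopologicalSpace.exists_countable_basis X
  -- a basic open set witnessing `f (α + 1) ⊊ f α` cannot witness it for any other `α`
  have hwit : ∀ α : Iio (ℵ₁ : Cardinal).ord, ∃ v ∈ b, (v ∩ f α).Nonempty ∧
      Disjoint v (f (α + 1)) := by
    rintro ⟨α, hα⟩
    have hαc : α.card ≤ ℵ₀ := lt_aleph_one_iff.mp (lt_ord.mp hα)
    obtain ⟨x, hxα, hxs⟩ := not_subset.mp fun hsub =>
      h α hαc ((hf (lt_add_one _).le).antisymm hsub)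
    obtain ⟨v, hv, hxv, hvs⟩ := hb.exists_subset_of_mem_open hxs (hc _).isOpen_compl
    exact ⟨v, hv, ⟨x, hxv, hxα⟩, subset_compl_iff_disjoint_right.mp hvs⟩
  choose v hvb hvne hvdisj using hwit
  have hinj : Function.Injective fun α => (⟨v α, hvb α⟩ : b) := by
    refine Function.Injective.of_lt_imp_ne fun α β hαβ heq => ?_
    obtain ⟨x, hxv, hxβ⟩ := hvne β
    have hvα : v α = v β := congrArg Subtype.val heq
    exact (hvdisj α).ne_of_mem (hvα ▸ hxv) (hf (Order.add_one_le_of_lt hαβ) hxβ) rfl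
  have : Countable b := hbc.to_subtype
  have : Countable (Iio (ℵ₁ : Cardinal).ord) := hinj.countable
  have hle := mk_le_aleph0 (α := Iio (ℵ₁ : Cardinal).ord)
  rw [mk_Iio_ordinal, card_ord, lift_le_aleph0] at hle
  exact hle.not_gt aleph0_lt_aleph_one

theorem StronglyCountableDim.fdI_nonempty {X : Type*} [PseudoMetricSpace X] [CompleteSpace X]
    (hX : StronglyCountableDim X) {S : Set X} (hS : IsClosed S) (hne : S.Nonempty) :
    (fdI X S).Nonempty := by
  obtain ⟨F, hFc, hFd, hFU⟩ := hX
  have : CompleteSpace S := hS.isComplete.completeSpace_coe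
  have : Nonempty S := hne.to_subtype
  obtain ⟨n, y, hy⟩ := nonempty_interior_of_iUnion_of_closed
    (f := fun n => (Subtype.val ⁻¹' F n : Set S)) (fun n => (hFc n).preimage continuous_subtype_val)
    (by rw [← preimage_iUnion, hFU, preimage_univ])
  obtain ⟨W, hWo, hWS⟩ := isOpen_induced_iff.mp (isOpen_interior (s := Subtype.val ⁻¹' F n))
  have hWF : W ∩ S ⊆ F n := fun x ⟨hxW, hxS⟩ =>
    interior_subset (s := Subtype.val ⁻¹' F n) (hWS ▸ hxW : (⟨x, hxS⟩ : S) ∈ _)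
  obtain ⟨d, hd⟩ := hFd n
  have hFSd : CovDimLE ↥(F n ∩ S) d := hd.mono_of_isClosed ((hFc n).inter hS) inter_subset_left
  refine ⟨y, y.2, W, hWo, (hWS ▸ hy : y ∈ Subtype.val ⁻¹' W), 3 * d + 2, ?_⟩
  have hWS' : F n ∩ S ∩ W = W ∩ S := by
    rw [inter_assoc, inter_comm S W, inter_eq_right.mpr hWF]
  exact hWS' ▸ hFSd.inter_isOpen ((hFc n).inter hS) hWo

theorem StronglyCountableDim.of_sUnion_eq_univ {X : Type*} [TopologicalSpace X]
    {𝒞 : Set (Set X)} (hc : 𝒞.Countable) (h𝒞 : ∀ C ∈ 𝒞, IsClosed C ∧ FinDimSpace C)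
    (hU : ⋃₀ 𝒞 = univ) : StronglyCountableDim X := by
  have h𝒞' : ∀ C ∈ insert ∅ 𝒞, IsClosed C ∧ FinDimSpace C := by
    rintro C (rfl | hC)
    exacts [⟨isClosed_empty, 0, covDimLE_of_isEmpty 0⟩, h𝒞 C hC]
  obtain ⟨F, hF⟩ := (hc.insert ∅).exists_eq_range (insert_nonempty _ _)
  refine ⟨F, fun n => (h𝒞' _ (hF ▸ mem_range_self n)).1,
    fun n => (h𝒞' _ (hF ▸ mem_range_self n)).2, ?_⟩
  rw [← sUnion_range, ← hF, sUnion_insert, empty_union, hU]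

theorem exists_countable_closed_finDim_cover_fdI {X : Type*} [PseudoMetricSpace X]
    [SecondCountableTopology X] {S : Set X} (hS : IsClosed S) :
    ∃ 𝒞 : Set (Set X), 𝒞.Countable ∧ (∀ C ∈ 𝒞, IsClosed C ∧ FinDimSpace C) ∧
      fdI X S ⊆ ⋃₀ 𝒞 := by
  obtain ⟨T, hTc, hT, hTU⟩ := TopologicalSpace.isOpen_sUnion_countable
    {U : Set X | IsOpen U ∧ FinDimSpace ↥(U ∩ S)} fun U hU => hU.1
  have : Countable T := hTc.to_subtype
  choose F hFc hFU hFeq using fun U : T => (hT U.2).1.exists_iUnion_isClosed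
  refine ⟨range fun p : T × ℕ => F p.1 p.2 ∩ S, countable_range _, ?_, ?_⟩
  · rintro _ ⟨⟨U, m⟩, rfl⟩
    obtain ⟨d, hd⟩ := (hT U.2).2
    exact ⟨(hFc U m).inter hS, d, hd.mono_of_isClosed ((hFc U m).inter hS)
      (inter_subset_inter_left S (hFU U m))⟩
  · rintro x ⟨hxS, U, hUo, hxU, hUd⟩
    obtain ⟨V, hVT, hxV⟩ := mem_sUnion.mp (hTU.symm ▸ mem_sUnion_of_mem hxU ⟨hUo, hUd⟩ :
      x ∈ ⋃₀ T)
    obtain ⟨m, hm⟩ := mem_iUnion.mp ((hFeq ⟨V, hVT⟩).1.symm ▸ hxV : x ∈ ⋃ m, F ⟨V, hVT⟩ m)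
    exact mem_sUnion.mpr ⟨_, ⟨(⟨V, hVT⟩, m), rfl⟩, hm, hxS⟩

theorem StronglyCountableDim.exists_fdDerived_eq_empty {X : Type*} [PseudoMetricSpace X]
    [CompleteSpace X] [SecondCountableTopology X] (hX : StronglyCountableDim X) :
    ∃ α : Ordinal, α.card ≤ Cardinal.aleph0 ∧ fdDerived X α = ∅ := by
  obtain ⟨α, hα, hstable⟩ :=
    exists_card_le_aleph0_add_one_eq (antitone_fdDerived X) (isClosed_fdDerived X)
  refine ⟨α, hα, not_nonempty_iff_eq_empty.mp fun hne => ?_⟩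
  obtain ⟨x, hx⟩ := hX.fdI_nonempty (isClosed_fdDerived X α) hne
  have hx' : x ∈ fdDerived X (α + 1) := hstable ▸ hx.1
  rw [fdDerived_add_one] at hx'
  exact hx'.2 hx

theorem StronglyCountableDim.of_fdDerived_eq_empty {X : Type*} [PseudoMetricSpace X]
    [SecondCountableTopology X] {α : Ordinal} (hα : α.card ≤ Cardinal.aleph0)
    (hempty : fdDerived X α = ∅) : StronglyCountableDim X := by
  have : Countable (Iio α) := by
    rwa [← Cardinal.mk_le_aleph0_iff, Cardinal.mk_Iio_ordinal, Cardinal.lift_le_aleph0]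
  choose 𝒞 h𝒞c h𝒞 h𝒞cov using fun β : Iio α =>
    exists_countable_closed_finDim_cover_fdI (isClosed_fdDerived X β)
  refine .of_sUnion_eq_univ (countable_iUnion h𝒞c) (fun C hC => ?_) ?_
  · obtain ⟨β, hβ⟩ := mem_iUnion.mp hC
    exact h𝒞 β C hβ
  · refine eq_univ_of_univ_subset fun x _ => ?_
    obtain ⟨β, hβ, hx⟩ := mem_iUnion₂.mp
      (compl_fdDerived_subset X α (hempty.symm ▸ notMem_empty x))
    exact sUnion_mono (subset_iUnion 𝒞 ⟨β, hβ⟩) (h𝒞cov ⟨β, hβ⟩ hx)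

/-- a compact metrizable space is strongly countable dimensional iff
some countable-indexed derived set `K^[α]` is empty. -/
theorem scd_iff_fdDerived_eq_empty
    (K : Type*) [TopologicalSpace K] [CompactSpace K]
    [TopologicalSpace.MetrizableSpace K] :
    StronglyCountableDim K ↔
      ∃ α : Ordinal, α.card ≤ Cardinal.aleph0 ∧ fdDerived K α = ∅ := by
  let _ : MetricSpace K := TopologicalSpace.metrizableSpaceMetric K
  exact ⟨StronglyCountableDim.exists_fdDerived_eq_empty,
    fun ⟨_, hα, hempty⟩ => .of_fdDerived_eq_empty hα hempty⟩

end
end
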